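/- arXiv:0807.1416 — 4 statements merged into one kernel-verified Lean document; each statement's English description precedes it below -/
import Mathlib

section
/- Doubling-of-variables limit lemma, part (i): with the notation below, the iterated limits taken first in ε and then in η satisfy liminf_{η→0} liminf_{ε→0} M_{ε,η} = limsup_{η→0} limsup_{ε→0} M_{ε,η} = M, and for any choice of maximum points (t^{ε,η}, x^{ε,η}, y^{ε,η}) of Ψ_{ε,η}, liminf_{η→0} liminf_{ε→0} [ū(t^{ε,η},x^{ε,η}) − v̄(t^{ε,η},y^{ε,η})] = limsup_{η→0} limsup_{ε→0} [ū(t^{ε,η},x^{ε,η}) − v̄(t^{ε,η},y^{ε,η})] = M. -/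
open Set Filter Topology

noncomputable section

/-- Euclidean space `ℝⁿ`. -/
abbrev En (n : ℕ) : Type := EuclideanSpace ℝ (Fin n)

/-- Frobenius norm of a matrix. -/
noncomputable def frobNorm {n d : ℕ} (M : Matrix (Fin n) (Fin d) ℝ) : ℝ :=
  Real.sqrt (∑ i, ∑ j, (M i j) ^ 2)

/-- Row vector `q` multiplied by the matrix `M`. -/
def rowMul {n d : ℕ} (q : En n) (M : Matrix (Fin n) (Fin d) ℝ) : En d :=
  WithLp.toLp 2 (fun j => ∑ i, q i * M i j)

/-- The lower Hamiltonian `H⁻ = sup_α inf_β [½Tr(σσᵀX) + ⟨b,q⟩ + f(t,x,r,qσ,α,β)]`,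
for a generic generator `f`. -/
noncomputable def Hinf {n d : ℕ} (A B : Type)
    (b : ℝ → En n → A → B → En n)
    (σm : ℝ → En n → A → B → Matrix (Fin n) (Fin d) ℝ)
    (f : ℝ → En n → ℝ → En d → A → B → ℝ)
    (t : ℝ) (x : En n) (r : ℝ) (q : En n) (X : Matrix (Fin n) (Fin n) ℝ) : ℝ :=
  ⨆ α : A, ⨅ β : B,
    (1 / 2) * Matrix.trace (σm t x α β * (σm t x α β).transpose * X)
      + (inner ℝ (b t x α β) q : ℝ)
      + f t x r (rowMul q (σm t x α β)) α β

/-- The upper Hamiltonian `H⁺ = inf_β sup_α [...]`. -/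
noncomputable def Hsup {n d : ℕ} (A B : Type)
    (b : ℝ → En n → A → B → En n)
    (σm : ℝ → En n → A → B → Matrix (Fin n) (Fin d) ℝ)
    (f : ℝ → En n → ℝ → En d → A → B → ℝ)
    (t : ℝ) (x : En n) (r : ℝ) (q : En n) (X : Matrix (Fin n) (Fin n) ℝ) : ℝ :=
  ⨅ β : B, ⨆ α : A,
    (1 / 2) * Matrix.trace (σm t x α β * (σm t x α β).transpose * X)
      + (inner ℝ (b t x α β) q : ℝ)
      + f t x r (rowMul q (σm t x α β)) α β

/-- `φ` is of class `C^{1,2}` on `[0,T)×ℝⁿ`, with time derivative `φt`,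
spatial gradient `Dφ` and spatial Hessian `D2φ`, all continuous on `[0,T)×ℝⁿ`. -/
structure IsC12 (T : ℝ) {n : ℕ} (φ φt : ℝ → En n → ℝ) (Dφ : ℝ → En n → En n)
    (D2φ : ℝ → En n → Matrix (Fin n) (Fin n) ℝ) : Prop where
  cont : ContinuousOn (fun p : ℝ × En n => φ p.1 p.2) (Ico 0 T ×ˢ univ)
  cont_t : ContinuousOn (fun p : ℝ × En n => φt p.1 p.2) (Ico 0 T ×ˢ univ)
  cont_D : ContinuousOn (fun p : ℝ × En n => Dφ p.1 p.2) (Ico 0 T ×ˢ univ)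
  cont_D2 : ContinuousOn (fun p : ℝ × En n => D2φ p.1 p.2) (Ico 0 T ×ˢ univ)
  deriv_t : ∀ t ∈ Ico (0 : ℝ) T, ∀ x : En n,
    HasDerivWithinAt (fun s => φ s x) (φt t x) (Ico 0 T) t
  grad_x : ∀ t ∈ Ico (0 : ℝ) T, ∀ x : En n, HasGradientAt (fun y => φ t y) (Dφ t x) x
  hess_x : ∀ t ∈ Ico (0 : ℝ) T, ∀ x : En n,
    HasFDerivAt (fun y => Dφ t y)
      (LinearMap.toContinuousLinearMap (Matrix.toEuclideanLin (D2φ t x))) x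

/-- `u` is a viscosity subsolution of the obstacle equation
`min{u-ℓ, max{-∂u/∂t - H(t,x,u,Du,D²u), u-ℓ'}} = 0` on `[0,T)×ℝⁿ`, `u(T,·) = G`. -/
def IsSubsolution (T : ℝ) {n : ℕ}
    (H : ℝ → En n → ℝ → En n → Matrix (Fin n) (Fin n) ℝ → ℝ)
    (ℓ ℓ' : ℝ → En n → ℝ) (G : En n → ℝ) (u : ℝ → En n → ℝ) : Prop :=
  UpperSemicontinuousOn (fun p : ℝ × En n => u p.1 p.2) (Icc 0 T ×ˢ univ)
  ∧ (∀ x : En n, u T x ≤ G x)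
  ∧ ∀ (φ φt : ℝ → En n → ℝ) (Dφ : ℝ → En n → En n)
      (D2φ : ℝ → En n → Matrix (Fin n) (Fin n) ℝ),
      IsC12 T φ φt Dφ D2φ →
      ∀ t ∈ Ico (0 : ℝ) T, ∀ x : En n,
        (∀ s ∈ Ico (0 : ℝ) T, ∀ y : En n, u s y - φ s y ≤ u t x - φ t x) →
        min (u t x - ℓ t x)
          (max (-(φt t x) - H t x (u t x) (Dφ t x) (D2φ t x)) (u t x - ℓ' t x)) ≤ 0

/-- `u` is a viscosity supersolution of the obstacle equation. -/
def IsSupersolution (T : ℝ) {n : ℕ}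
    (H : ℝ → En n → ℝ → En n → Matrix (Fin n) (Fin n) ℝ → ℝ)
    (ℓ ℓ' : ℝ → En n → ℝ) (G : En n → ℝ) (u : ℝ → En n → ℝ) : Prop :=
  LowerSemicontinuousOn (fun p : ℝ × En n => u p.1 p.2) (Icc 0 T ×ˢ univ)
  ∧ (∀ x : En n, G x ≤ u T x)
  ∧ ∀ (φ φt : ℝ → En n → ℝ) (Dφ : ℝ → En n → En n)
      (D2φ : ℝ → En n → Matrix (Fin n) (Fin n) ℝ),
      IsC12 T φ φt Dφ D2φ →
      ∀ t ∈ Ico (0 : ℝ) T, ∀ x : En n,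
        (∀ s ∈ Ico (0 : ℝ) T, ∀ y : En n, u t x - φ t x ≤ u s y - φ s y) →
        0 ≤ min (u t x - ℓ t x)
          (max (-(φt t x) - H t x (u t x) (Dφ t x) (D2φ t x)) (u t x - ℓ' t x))

/-- Hypothesis (H1): continuity of `b`, `σ` on `[0,T]×ℝⁿ×A×B` and uniform
Lipschitz continuity in `x`. -/
def HypH1 {n d : ℕ} (T : ℝ) (A B : Type) [TopologicalSpace A] [TopologicalSpace B]
    (b : ℝ → En n → A → B → En n)
    (σm : ℝ → En n → A → B → Matrix (Fin n) (Fin d) ℝ) : Prop :=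
  ContinuousOn (fun p : ℝ × En n × A × B => b p.1 p.2.1 p.2.2.1 p.2.2.2)
      (Icc 0 T ×ˢ (univ : Set (En n × A × B)))
  ∧ ContinuousOn (fun p : ℝ × En n × A × B => σm p.1 p.2.1 p.2.2.1 p.2.2.2)
      (Icc 0 T ×ˢ (univ : Set (En n × A × B)))
  ∧ ∃ CL > (0 : ℝ), ∀ t ∈ Icc (0 : ℝ) T, ∀ (x x' : En n) (α : A) (β : B),
      ‖b t x α β - b t x' α β‖ + frobNorm (σm t x α β - σm t x' α β) ≤ CL * ‖x - x'‖

/-- Hypothesis (H2): `g`, `h`, `h'` continuous and bounded, `h < h'`,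
`h(T,·) ≤ g ≤ h'(T,·)`; `F` continuous with quadratic growth in `z`
with constant `C`. -/
def HypH2 {n d : ℕ} (T C : ℝ) (A B : Type) [TopologicalSpace A] [TopologicalSpace B]
    (g : En n → ℝ) (h h' : ℝ → En n → ℝ)
    (F : ℝ → En n → ℝ → En d → A → B → ℝ) : Prop :=
  Continuous g ∧ (∃ M, ∀ x : En n, |g x| ≤ M)
  ∧ ContinuousOn (fun p : ℝ × En n => h p.1 p.2) (Icc 0 T ×ˢ univ)
  ∧ ContinuousOn (fun p : ℝ × En n => h' p.1 p.2) (Icc 0 T ×ˢ univ)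
  ∧ (∃ M, ∀ t ∈ Icc (0 : ℝ) T, ∀ x : En n, |h t x| ≤ M ∧ |h' t x| ≤ M)
  ∧ (∀ t ∈ Icc (0 : ℝ) T, ∀ x : En n, h t x < h' t x)
  ∧ (∀ x : En n, h T x ≤ g x ∧ g x ≤ h' T x)
  ∧ ContinuousOn
      (fun p : ℝ × En n × ℝ × En d × A × B =>
        F p.1 p.2.1 p.2.2.1 p.2.2.2.1 p.2.2.2.2.1 p.2.2.2.2.2)
      (Icc 0 T ×ˢ (univ : Set (En n × ℝ × En d × A × B)))
  ∧ 0 < C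
  ∧ ∀ t ∈ Icc (0 : ℝ) T, ∀ (x : En n) (y : ℝ) (z : En d) (α : A) (β : B),
      |F t x y z α β| ≤ C * (1 + ‖z‖ ^ 2)

/-- Hypothesis (H3): `F` is differentiable in `(x,y,z)`, with
`|∂F/∂x|, |∂F/∂z| ≤ C(1+|z|²)` and `∂F/∂y ≤ C_ε + ε|z|²` for every `ε > 0`. -/
def HypH3 {n d : ℕ} (T C : ℝ) (A B : Type)
    (F : ℝ → En n → ℝ → En d → A → B → ℝ) : Prop :=
  ∃ (Fx : ℝ → En n → ℝ → En d → A → B → En n)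
    (Fy : ℝ → En n → ℝ → En d → A → B → ℝ)
    (Fz : ℝ → En n → ℝ → En d → A → B → En d),
    (∀ t ∈ Icc (0 : ℝ) T, ∀ (x : En n) (y : ℝ) (z : En d) (α : A) (β : B),
      HasGradientAt (fun x' => F t x' y z α β) (Fx t x y z α β) x
      ∧ HasDerivAt (fun y' => F t x y' z α β) (Fy t x y z α β) y
      ∧ HasGradientAt (fun z' => F t x y z' α β) (Fz t x y z α β) z
      ∧ ‖Fx t x y z α β‖ ≤ C * (1 + ‖z‖ ^ 2)
      ∧ ‖Fz t x y z α β‖ ≤ C * (1 + ‖z‖ ^ 2))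
    ∧ ∀ ε > (0 : ℝ), ∃ Cε > (0 : ℝ), ∀ t ∈ Icc (0 : ℝ) T,
        ∀ (x : En n) (y : ℝ) (z : En d) (α : A) (β : B),
          Fy t x y z α β ≤ Cε + ε * ‖z‖ ^ 2

/-- The function `ρ(x) = (1/λ) ln((e^{λγx}+1)/γ)`. -/
noncomputable def rho (γ lam : ℝ) (x : ℝ) : ℝ :=
  (1 / lam) * Real.log ((Real.exp (lam * γ * x) + 1) / γ)

/-- `ρ'`. -/
noncomputable def rho' (γ lam : ℝ) : ℝ → ℝ := deriv (rho γ lam)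

/-- `ρ''`. -/
noncomputable def rho'' (γ lam : ℝ) : ℝ → ℝ := deriv (rho' γ lam)

/-- The transformed generator
`F̄(t,x,ū,z̄) = (ρ''(ū)/ρ'(ū))|z̄|² − Kρ(ū)/ρ'(ū) + (e^{Kt}/ρ'(ū)) F(t,x,e^{−Kt}ρ(ū)+C̃,e^{−Kt}ρ'(ū)z̄)`. -/
noncomputable def Fbar {n d : ℕ} {A B : Type} (γ lam K Ct : ℝ)
    (F : ℝ → En n → ℝ → En d → A → B → ℝ)
    (t : ℝ) (x : En n) (ub : ℝ) (zb : En d) (α : A) (β : B) : ℝ :=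
  (rho'' γ lam ub / rho' γ lam ub) * ‖zb‖ ^ 2
    - K * rho γ lam ub / rho' γ lam ub
    + (Real.exp (K * t) / rho' γ lam ub)
      * F t x (Real.exp (-(K * t)) * rho γ lam ub + Ct)
          ((Real.exp (-(K * t)) * rho' γ lam ub) • zb) α β

/-- The change of variable `ū(t,x) = ρ⁻¹(e^{Kt}(u(t,x) − C̃))`. -/
noncomputable def transf {n : ℕ} (γ lam K Ct : ℝ) (u : ℝ → En n → ℝ) : ℝ → En n → ℝ :=
  fun t x => Function.invFun (rho γ lam) (Real.exp (K * t) * (u t x - Ct))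

/-- `(p,q,X)` belongs to the second-order parabolic superjet `𝒫^{2,+}u(t₀,x₀)`. -/
def ParabSuperjet (T : ℝ) {n : ℕ} (u : ℝ → En n → ℝ) (t0 : ℝ) (x0 : En n)
    (p : ℝ) (q : En n) (X : Matrix (Fin n) (Fin n) ℝ) : Prop :=
  X.IsSymm ∧
  ∀ ε > (0 : ℝ), ∃ δ > (0 : ℝ), ∀ t ∈ Ico (0 : ℝ) T, ∀ x : En n,
    |t - t0| < δ → ‖x - x0‖ < δ →
    u t x ≤ u t0 x0 + p * (t - t0) + (inner ℝ q (x - x0) : ℝ)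
      + (1 / 2) * (inner ℝ (Matrix.toEuclideanLin X (x - x0)) (x - x0) : ℝ)
      + ε * (|t - t0| + ‖x - x0‖ ^ 2)

/-- The parabolic subjet `𝒫^{2,−}u = −𝒫^{2,+}(−u)`. -/
def ParabSubjet (T : ℝ) {n : ℕ} (u : ℝ → En n → ℝ) (t0 : ℝ) (x0 : En n)
    (p : ℝ) (q : En n) (X : Matrix (Fin n) (Fin n) ℝ) : Prop :=
  ParabSuperjet T (fun t x => -(u t x)) t0 x0 (-p) (-q) (-X)

/-- The closure `𝒫̄^{2,+}u(t₀,x₀)` of the parabolic superjet. -/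
def ClosedParabSuperjet (T : ℝ) {n : ℕ} (u : ℝ → En n → ℝ) (t0 : ℝ) (x0 : En n)
    (p : ℝ) (q : En n) (X : Matrix (Fin n) (Fin n) ℝ) : Prop :=
  ∃ (tk : ℕ → ℝ) (xk : ℕ → En n) (pk : ℕ → ℝ) (qk : ℕ → En n)
    (Xk : ℕ → Matrix (Fin n) (Fin n) ℝ),
    (∀ k, tk k ∈ Ico (0 : ℝ) T ∧ ParabSuperjet T u (tk k) (xk k) (pk k) (qk k) (Xk k))
    ∧ Tendsto tk atTop (nhds t0) ∧ Tendsto xk atTop (nhds x0)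
    ∧ Tendsto (fun k => u (tk k) (xk k)) atTop (nhds (u t0 x0))
    ∧ Tendsto pk atTop (nhds p) ∧ Tendsto qk atTop (nhds q)
    ∧ Tendsto Xk atTop (nhds X)

/-- The doubled and penalized function
`Ψ_{ε,η}(t,x,y) = ū(t,x) − v̄(t,y) − |x−y|²/ε² − η(|x|²+|y|²)`. -/
noncomputable def Psi {n : ℕ} (ub vb : ℝ → En n → ℝ) (ε η : ℝ)
    (t : ℝ) (x y : En n) : ℝ :=
  ub t x - vb t y - ‖x - y‖ ^ 2 / ε ^ 2 - η * (‖x‖ ^ 2 + ‖y‖ ^ 2)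

/-- The exponentially transformed generator
`f(t,x,y,z) = 2Cy[F(t,x,(ln y)/(2C), z/(2Cy)) − |z|²/(4Cy²)]` for `y > 0`, `0` otherwise. -/
noncomputable def expGen {n d : ℕ} {A B : Type} (C : ℝ)
    (F : ℝ → En n → ℝ → En d → A → B → ℝ)
    (t : ℝ) (x : En n) (y : ℝ) (z : En d) (α : A) (β : B) : ℝ :=
  if 0 < y then
    2 * C * y * (F t x (Real.log y / (2 * C)) ((1 / (2 * C * y)) • z) α β
      - ‖z‖ ^ 2 / (4 * C * y ^ 2))
  else 0

/-!
Comparing `Ψ_{ε,η}` at a maximum point with its value at `(t, x, x)` gives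
`ū(t,x) − v̄(t,x) − 2η|x|² ≤ M_{ε,η} ≤ ū(t^{ε,η},x^{ε,η}) − v̄(t^{ε,η},y^{ε,η})`,
which bounds both iterated limits from below by `M`. Comparing it with `(t^{ε,η}, 0, 0)` shows
that, for fixed `η`, the points `x^{ε,η}` stay in a ball of radius `O(η^{-1/2})` and
`|x^{ε,η} − y^{ε,η}| = O(ε)`. Upper semicontinuity of `ū − v̄` and compactness of
`[0,T] × ball` then give `ū(t,x) − v̄(t,y) < c` uniformly for `x − y` small, for every `c > M`.
So both quantities tend to `M` along the iterated filter "first `ε → 0`, then `η → 0`"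
(`Filter.curry`), and this fixes their iterated `liminf` and `limsup`.
-/

section IteratedLimits

variable {ι κ : Type*}

theorem tendsto_and_tendsto_of_le_of_forall_lt {l : Filter ι} {f g : ι → ℝ} {M : ℝ}
    (hfg : ∀ᶠ i in l, f i ≤ g i) (hf : ∀ r < M, ∀ᶠ i in l, r < f i)
    (hg : ∀ c > M, ∀ᶠ i in l, g i < c) :
    Tendsto f l (𝓝 M) ∧ Tendsto g l (𝓝 M) :=
  ⟨tendsto_order.2 ⟨hf, fun c hc => (hfg.and (hg c hc)).mono fun _ h => h.1.trans_lt h.2⟩,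
    tendsto_order.2 ⟨fun r hr => (hfg.and (hf r hr)).mono fun _ h => h.2.trans_le h.1, hg⟩⟩

theorem liminf_mem_Icc_and_limsup_mem_Icc {l : Filter ι} [NeBot l] {f : ι → ℝ} {a b : ℝ}
    (h : ∀ᶠ i in l, f i ∈ Icc a b) : liminf f l ∈ Icc a b ∧ limsup f l ∈ Icc a b := by
  have hle : ∀ᶠ i in l, f i ≤ b := h.mono fun _ hi => hi.2
  have hge : ∀ᶠ i in l, a ≤ f i := h.mono fun _ hi => hi.1
  have hbdd_above := isBoundedUnder_of_eventually_le hle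
  have hbdd_below := isBoundedUnder_of_eventually_ge hge
  have ha : a ≤ liminf f l := le_liminf_of_le hbdd_above.isCoboundedUnder_ge hge
  have hb : limsup f l ≤ b := limsup_le_of_le hbdd_below.isCoboundedUnder_le hle
  have hinf_le_sup : liminf f l ≤ limsup f l := liminf_le_limsup hbdd_above hbdd_below
  exact ⟨⟨ha, hinf_le_sup.trans hb⟩, ⟨ha.trans hinf_le_sup, hb⟩⟩

theorem tendsto_liminf_and_limsup_of_tendsto_curry {l : Filter ι} [NeBot l] {l' : Filter κ}
    {u : κ → ι → ℝ} {M : ℝ} (h : Tendsto (Function.uncurry u) (l'.curry l) (𝓝 M)) :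
    Tendsto (fun k => liminf (u k) l) l' (𝓝 M) ∧ Tendsto (fun k => limsup (u k) l) l' (𝓝 M) := by
  simp only [(nhds_basis_Icc_pos M).tendsto_right_iff] at h ⊢
  refine ⟨fun δ hδ => ?_, fun δ hδ => ?_⟩ <;>
  filter_upwards [eventually_curry_iff.1 (h δ hδ)] with k hk
  exacts [(liminf_mem_Icc_and_limsup_mem_Icc hk).1, (liminf_mem_Icc_and_limsup_mem_Icc hk).2]

end IteratedLimits

theorem eventually_forall_sub_sub_lt {E : Type*} [TopologicalSpace E] [AddGroup E]
    [ContinuousSub E] {u v : ℝ → E → ℝ} {I : Set ℝ}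
    (hu : UpperSemicontinuousOn (fun p : ℝ × E => u p.1 p.2) (I ×ˢ univ))
    (hv : LowerSemicontinuousOn (fun p : ℝ × E => v p.1 p.2) (I ×ˢ univ))
    {K : Set (ℝ × E)} (hK : IsCompact K) (hKI : K ⊆ I ×ˢ univ) {c : ℝ}
    (hc : ∀ p ∈ K, u p.1 p.2 - v p.1 p.2 < c) :
    ∀ᶠ d in 𝓝 (0 : E), ∀ p ∈ K, u p.1 p.2 - v p.1 (p.2 - d) < c := by
  let P (d : E) (p : ℝ × E) : Prop := p.1 ∈ I → u p.1 p.2 - v p.1 (p.2 - d) < c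
  have hnear : ∀ p ∈ K, ∀ᶠ z : E × (ℝ × E) in 𝓝 (0, p), P z.1 z.2 := by
    intro p hpK
    have hp := hKI hpK
    obtain ⟨δ, hδ, hδc⟩ : ∃ δ > 0, u p.1 p.2 - v p.1 p.2 + 2 * δ = c :=
      ⟨(c - (u p.1 p.2 - v p.1 p.2)) / 2, by linarith [hc p hpK], by ring⟩
    have hu_near := eventually_nhdsWithin_iff.1 (hu p hp (u p.1 p.2 + δ) (by linarith))
    have hv_near := eventually_nhdsWithin_iff.1 (hv p hp (v p.1 p.2 - δ) (by linarith))
    have hsnd : Tendsto (fun z : E × (ℝ × E) => z.2) (𝓝 (0, p)) (𝓝 p) :=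
      continuous_snd.tendsto' _ _ rfl
    have hshift : Tendsto (fun z : E × (ℝ × E) => (z.2.1, z.2.2 - z.1)) (𝓝 (0, p)) (𝓝 p) :=
      (by fun_prop : Continuous fun z : E × (ℝ × E) => (z.2.1, z.2.2 - z.1)).tendsto' _ _
        (by simp)
    filter_upwards [hsnd.eventually hu_near, hshift.eventually hv_near] with z hzu hzv hzI
    have := hzu ⟨hzI, trivial⟩
    have := hzv ⟨hzI, trivial⟩
    simp only at *
    linarith
  filter_upwards [hK.eventually_forall_of_forall_eventually hnear] with d hd p hp
  exact hd p hp (hKI hp).1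

section Penalization

variable {n : ℕ} {ub vb : ℝ → En n → ℝ} {ε η t B : ℝ} {x y : En n}

theorem Psi_self : Psi ub vb ε η t x x = ub t x - vb t x - 2 * η * ‖x‖ ^ 2 := by
  simp only [Psi, sub_self, norm_zero]
  ring

theorem Psi_le_sub (hη : 0 ≤ η) : Psi ub vb ε η t x y ≤ ub t x - vb t y := by
  have : 0 ≤ ‖x - y‖ ^ 2 / ε ^ 2 + η * (‖x‖ ^ 2 + ‖y‖ ^ 2) := by positivity
  simp only [Psi]
  linarith

theorem penalty_le_of_Psi_zero_le (hB : ∀ x y, |ub t x - vb t y| ≤ B)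
    (hmax : Psi ub vb ε η t 0 0 ≤ Psi ub vb ε η t x y) :
    ‖x - y‖ ^ 2 / ε ^ 2 + η * (‖x‖ ^ 2 + ‖y‖ ^ 2) ≤ 2 * B := by
  rw [Psi_self] at hmax
  have h₀ := (abs_le.1 (hB 0 0)).1
  have h₁ := (abs_le.1 (hB x y)).2
  simp only [Psi, norm_zero] at hmax
  linarith

theorem norm_sub_le_of_Psi_zero_le (hε : 0 < ε) (hη : 0 ≤ η)
    (hB : ∀ x y, |ub t x - vb t y| ≤ B) (hmax : Psi ub vb ε η t 0 0 ≤ Psi ub vb ε η t x y) :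
    ‖x - y‖ ≤ √(2 * B) * ε := by
  have hpen := penalty_le_of_Psi_zero_le hB hmax
  have : ‖x - y‖ ^ 2 / ε ^ 2 ≤ 2 * B := by nlinarith [sq_nonneg ‖x‖, sq_nonneg ‖y‖]
  rw [div_le_iff₀ (by positivity)] at this
  calc ‖x - y‖ = √(‖x - y‖ ^ 2) := (Real.sqrt_sq (norm_nonneg _)).symm
    _ ≤ √(2 * B * ε ^ 2) := Real.sqrt_le_sqrt this
    _ = √(2 * B) * ε := by rw [Real.sqrt_mul' _ (by positivity), Real.sqrt_sq hε.le]

theorem norm_le_of_Psi_zero_le (hη : 0 < η)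
    (hB : ∀ x y, |ub t x - vb t y| ≤ B) (hmax : Psi ub vb ε η t 0 0 ≤ Psi ub vb ε η t x y) :
    ‖x‖ ≤ √(2 * B / η) := by
  have hpen := penalty_le_of_Psi_zero_le hB hmax
  have : 0 ≤ ‖x - y‖ ^ 2 / ε ^ 2 := by positivity
  have hB₀ : 0 ≤ B := (abs_nonneg _).trans (hB 0 0)
  rw [Real.le_sqrt (norm_nonneg _) (by positivity), le_div_iff₀ hη]
  nlinarith [sq_nonneg ‖y‖]

theorem eventually_curry_lt_of_Psi_self_le {t r : ℝ} {x : En n} (hr : r < ub t x - vb t x)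
    {m : ℝ → ℝ → ℝ} (hm : ∀ η > 0, ∀ ε > 0, Psi ub vb ε η t x x ≤ m η ε) :
    ∀ᶠ p in (𝓝[>] (0 : ℝ)).curry (𝓝[>] 0), r < m p.1 p.2 := by
  have hpen : Tendsto (fun η => ub t x - vb t x - 2 * η * ‖x‖ ^ 2) (𝓝[>] 0)
      (𝓝 (ub t x - vb t x)) :=
    tendsto_nhdsWithin_of_tendsto_nhds <|
      (by fun_prop : Continuous fun η : ℝ => ub t x - vb t x - 2 * η * ‖x‖ ^ 2).tendsto' 0 _
        (by simp)
  refine eventually_curry_iff.2 ?_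
  filter_upwards [hpen.eventually_const_lt hr, self_mem_nhdsWithin] with η hrη hη
  filter_upwards [self_mem_nhdsWithin] with ε hε
  rw [← Psi_self] at hrη
  exact hrη.trans_le (hm η hη ε hε)

end Penalization

theorem eventually_sub_lt_of_Psi_zero_le {n : ℕ} {ub vb : ℝ → En n → ℝ} {I : Set ℝ}
    (hI : IsCompact I)
    (husc : UpperSemicontinuousOn (fun p : ℝ × En n => ub p.1 p.2) (I ×ˢ univ))
    (hlsc : LowerSemicontinuousOn (fun p : ℝ × En n => vb p.1 p.2) (I ×ˢ univ))
    {B c η : ℝ} (hB : ∀ t ∈ I, ∀ x y, |ub t x - vb t y| ≤ B)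
    (hc : ∀ t ∈ I, ∀ x, ub t x - vb t x < c) (hη : 0 < η)
    {pt : ℝ → ℝ} {px py : ℝ → En n}
    (hmax : ∀ ε > 0,
      pt ε ∈ I ∧ Psi ub vb ε η (pt ε) 0 0 ≤ Psi ub vb ε η (pt ε) (px ε) (py ε)) :
    ∀ᶠ ε in 𝓝[>] 0, ub (pt ε) (px ε) - vb (pt ε) (py ε) < c := by
  have hnear := eventually_forall_sub_sub_lt husc hlsc
    (hI.prod (isCompact_closedBall (0 : En n) √(2 * B / η)))
    (prod_mono_right (subset_univ _)) fun p hp => hc p.1 hp.1 p.2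
  have hdiff : Tendsto (fun ε => px ε - py ε) (𝓝[>] 0) (𝓝 0) := by
    refine squeeze_zero_norm' (a := fun ε => √(2 * B) * ε) ?_ ?_
    · filter_upwards [self_mem_nhdsWithin] with ε hε
      exact norm_sub_le_of_Psi_zero_le hε hη.le (hB _ (hmax ε hε).1) (hmax ε hε).2
    · exact tendsto_nhdsWithin_of_tendsto_nhds
        ((continuous_const_mul _).tendsto' 0 0 (mul_zero _))
  filter_upwards [hdiff.eventually hnear, self_mem_nhdsWithin] with ε hε hε₀
  obtain ⟨hptI, hmaxε⟩ := hmax ε hε₀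
  have hpx : px ε ∈ Metric.closedBall (0 : En n) √(2 * B / η) := by
    simpa using norm_le_of_Psi_zero_le hη (hB _ hptI) hmaxε
  simpa using hε (pt ε, px ε) ⟨hptI, hpx⟩

theorem doubling_limits_i_general
    {n : ℕ} (T : ℝ)
    (ub vb : ℝ → En n → ℝ)
    (hubd : ∃ M, ∀ t ∈ Icc (0:ℝ) T, ∀ x : En n, |ub t x| ≤ M)
    (hvbd : ∃ M, ∀ t ∈ Icc (0:ℝ) T, ∀ x : En n, |vb t x| ≤ M)
    (husc : UpperSemicontinuousOn (fun p : ℝ × En n => ub p.1 p.2) (Icc 0 T ×ˢ univ))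
    (hlsc : LowerSemicontinuousOn (fun p : ℝ × En n => vb p.1 p.2) (Icc 0 T ×ˢ univ))
    (M : ℝ)
    (hM : M = sSup ((fun p : ℝ × En n => ub p.1 p.2 - vb p.1 p.2) '' (Icc 0 T ×ˢ univ)))
    (pt : ℝ → ℝ → ℝ) (px py : ℝ → ℝ → En n)
    (hmax : ∀ ε > (0:ℝ), ∀ η > (0:ℝ),
      pt ε η ∈ Icc (0:ℝ) T ∧
      ∀ t ∈ Icc (0:ℝ) T, ∀ x y : En n,
        Psi ub vb ε η t x y ≤ Psi ub vb ε η (pt ε η) (px ε η) (py ε η))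
 :
    (Filter.liminf (fun η => Filter.liminf
        (fun ε => Psi ub vb ε η (pt ε η) (px ε η) (py ε η)) (𝓝[>] (0:ℝ)))
        (𝓝[>] (0:ℝ)) = M)
    ∧ (Filter.limsup (fun η => Filter.limsup
        (fun ε => Psi ub vb ε η (pt ε η) (px ε η) (py ε η)) (𝓝[>] (0:ℝ)))
        (𝓝[>] (0:ℝ)) = M)
    ∧ (Filter.liminf (fun η => Filter.liminf
        (fun ε => ub (pt ε η) (px ε η) - vb (pt ε η) (py ε η)) (𝓝[>] (0:ℝ)))
        (𝓝[>] (0:ℝ)) = M)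
    ∧ (Filter.limsup (fun η => Filter.limsup
        (fun ε => ub (pt ε η) (px ε η) - vb (pt ε η) (py ε η)) (𝓝[>] (0:ℝ)))
        (𝓝[>] (0:ℝ)) = M) := by
  obtain ⟨Bu, hBu⟩ := hubd
  obtain ⟨Bv, hBv⟩ := hvbd
  have hB : ∀ t ∈ Icc 0 T, ∀ x y, |ub t x - vb t y| ≤ Bu + Bv := fun t ht x y =>
    (abs_sub _ _).trans (add_le_add (hBu t ht x) (hBv t ht y))
  have hbdd : BddAbove ((fun p : ℝ × En n => ub p.1 p.2 - vb p.1 p.2) '' (Icc 0 T ×ˢ univ)) :=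
    ⟨Bu + Bv, forall_mem_image.2 fun p hp => (le_abs_self _).trans (hB p.1 hp.1 p.2 p.2)⟩
  have hdiag_le : ∀ t ∈ Icc 0 T, ∀ x, ub t x - vb t x ≤ M := fun t ht x =>
    hM ▸ le_csSup hbdd (mem_image_of_mem _ (mk_mem_prod ht (mem_univ x)))
  let Ψ : ℝ → ℝ → ℝ := fun η ε => Psi ub vb ε η (pt ε η) (px ε η) (py ε η)
  let D : ℝ → ℝ → ℝ := fun η ε => ub (pt ε η) (px ε η) - vb (pt ε η) (py ε η)
  let l := (𝓝[>] (0 : ℝ)).curry (𝓝[>] (0 : ℝ))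
  have hle : ∀ᶠ p in l, Function.uncurry Ψ p ≤ Function.uncurry D p :=
    eventually_curry_iff.2 (eventually_mem_nhdsWithin.mono fun _ hη =>
      Eventually.of_forall fun _ => Psi_le_sub (le_of_lt hη))
  have hlow : ∀ r < M, ∀ᶠ p in l, r < Function.uncurry Ψ p := by
    intro r hr
    have hS := mk_mem_prod (hmax 1 one_pos 1 one_pos).1 (mem_univ (0 : En n))
    obtain ⟨_, ⟨⟨t, x⟩, htx, rfl⟩, hrtx⟩ :=
      exists_lt_of_lt_csSup ⟨_, mem_image_of_mem _ hS⟩ (hM ▸ hr)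
    exact eventually_curry_lt_of_Psi_self_le hrtx fun η hη ε hε => (hmax ε hε η hη).2 t htx.1 x x
  have hup : ∀ c > M, ∀ᶠ p in l, Function.uncurry D p < c := fun c hc =>
    eventually_curry_iff.2 <| eventually_mem_nhdsWithin.mono fun η hη =>
      eventually_sub_lt_of_Psi_zero_le isCompact_Icc husc hlsc hB
        (fun t ht x => (hdiag_le t ht x).trans_lt hc) hη fun ε hε =>
          ⟨(hmax ε hε η hη).1, (hmax ε hε η hη).2 _ (hmax ε hε η hη).1 0 0⟩
  obtain ⟨hΨ, hD⟩ := tendsto_and_tendsto_of_le_of_forall_lt hle hlow hup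
  obtain ⟨hΨinf, hΨsup⟩ := tendsto_liminf_and_limsup_of_tendsto_curry hΨ
  obtain ⟨hDinf, hDsup⟩ := tendsto_liminf_and_limsup_of_tendsto_curry hD
  exact ⟨hΨinf.liminf_eq, hΨsup.limsup_eq, hDinf.liminf_eq, hDsup.limsup_eq⟩

/-- Doubling-of-variables limit lemma, part (i): iterated limits
first in `ε` and then in `η`. -/
theorem doubling_limits_i
    {n : ℕ} (hn : 1 ≤ n) (T : ℝ) (hT : 0 < T)
    (ub vb : ℝ → En n → ℝ)
    (hubd : ∃ M, ∀ t ∈ Icc (0:ℝ) T, ∀ x : En n, |ub t x| ≤ M)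
    (hvbd : ∃ M, ∀ t ∈ Icc (0:ℝ) T, ∀ x : En n, |vb t x| ≤ M)
    (husc : UpperSemicontinuousOn (fun p : ℝ × En n => ub p.1 p.2) (Icc 0 T ×ˢ univ))
    (hlsc : LowerSemicontinuousOn (fun p : ℝ × En n => vb p.1 p.2) (Icc 0 T ×ˢ univ))
    (M : ℝ)
    (hM : M = sSup ((fun p : ℝ × En n => ub p.1 p.2 - vb p.1 p.2) '' (Icc 0 T ×ˢ univ)))
    (pt : ℝ → ℝ → ℝ) (px py : ℝ → ℝ → En n)
    (hmax : ∀ ε > (0:ℝ), ∀ η > (0:ℝ),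
      pt ε η ∈ Icc (0:ℝ) T ∧
      ∀ t ∈ Icc (0:ℝ) T, ∀ x y : En n,
        Psi ub vb ε η t x y ≤ Psi ub vb ε η (pt ε η) (px ε η) (py ε η))
 :
    (Filter.liminf (fun η => Filter.liminf
        (fun ε => Psi ub vb ε η (pt ε η) (px ε η) (py ε η)) (𝓝[>] (0:ℝ)))
        (𝓝[>] (0:ℝ)) = M)
    ∧ (Filter.limsup (fun η => Filter.limsup
        (fun ε => Psi ub vb ε η (pt ε η) (px ε η) (py ε η)) (𝓝[>] (0:ℝ)))
        (𝓝[>] (0:ℝ)) = M)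
    ∧ (Filter.liminf (fun η => Filter.liminf
        (fun ε => ub (pt ε η) (px ε η) - vb (pt ε η) (py ε η)) (𝓝[>] (0:ℝ)))
        (𝓝[>] (0:ℝ)) = M)
    ∧ (Filter.limsup (fun η => Filter.limsup
        (fun ε => ub (pt ε η) (px ε η) - vb (pt ε η) (py ε η)) (𝓝[>] (0:ℝ)))
        (𝓝[>] (0:ℝ)) = M) :=
  doubling_limits_i_general T ub vb hubd hvbd husc hlsc M hM pt px py hmax
end
end

section
/- Doubling-of-variables limit lemma, parts (ii) and (iii): with the notation below, the iterated limits taken first in η and then in ε satisfy (ii) liminf_{ε→0} liminf_{η→0} M_{ε,η} = limsup_{ε→0} limsup_{η→0} M_{ε,η} = M' and, for any choice of maximum points (t^{ε,η}, x^{ε,η}, y^{ε,η}) of Ψ_{ε,η}, the same iterated limits of ū(t^{ε,η},x^{ε,η}) − v̄(t^{ε,η},y^{ε,η}) equal M'; and (iii) limsup_{ε→0} limsup_{η→0} |x^{ε,η} − y^{ε,η}|/ε = 0 and limsup_{ε→0} limsup_{η→0} η(|x^{ε,η}|² + |y^{ε,η}|²) = 0. -/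
open Set Filter Topology

noncomputable section

/-! The maximum points are compared with two kinds of competitors. The point `(t, 0, 0)`
shows that the penalty at a maximum point stays below `2B`, where `B` bounds
`|ū(t,x) − v̄(t,y)|`; hence `|x − y| ≤ ε (B + 1)` there, and `M_{ε,η}` is at most
`M(ε (B + 1))`. A nearly optimal pair at distance at most `ε²` shows that, once `η` is small,
`M_{ε,η}` is at least `M(ε²) − ε²` up to an arbitrarily small error. Both bounds tend to `M'`
as `ε → 0`, and the penalty at a maximum point is at most their difference. -/

theorem tendsto_nhdsGT_zero_of_continuous {f : ℝ → ℝ} (hf : Continuous f) (h0 : f 0 = 0)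
    (hpos : ∀ ε > 0, 0 < f ε) : Tendsto f (𝓝[>] 0) (𝓝[>] 0) := by
  simpa [h0] using
    (hf.continuousWithinAt (s := Ioi 0) (x := 0)).tendsto_nhdsWithin (t := Ioi 0) hpos

theorem tendsto_nhdsGT_zero_of_forall_pos_mem_Icc {v lo hi : ℝ → ℝ} {m : ℝ}
    (hlo : Tendsto lo (𝓝[>] 0) (𝓝 m)) (hhi : Tendsto hi (𝓝[>] 0) (𝓝 m))
    (hv : ∀ ε > 0, v ε ∈ Icc (lo ε) (hi ε)) : Tendsto v (𝓝[>] 0) (𝓝 m) :=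
  (hlo.Icc hhi).of_smallSets (eventually_mem_nhdsWithin.mono hv)

section LiminfLimsup

variable {α β : Type*} [ConditionallyCompleteLinearOrder β] [DenselyOrdered β]
  [NoMinOrder β] [NoMaxOrder β] {l : Filter α} [l.NeBot] {f : α → β} {L U : β}

theorem liminf_limsup_mem_Icc (hL : ∀ a < L, ∀ᶠ x in l, a ≤ f x)
    (hU : ∀ b > U, ∀ᶠ x in l, f x ≤ b) :
    liminf f l ∈ Icc L U ∧ limsup f l ∈ Icc L U := by
  obtain ⟨a, ha⟩ := exists_lt L
  obtain ⟨b, hb⟩ := exists_gt U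
  have hbddAbove : IsBoundedUnder (· ≤ ·) l f := ⟨b, hU b hb⟩
  have hbddBelow : IsBoundedUnder (· ≥ ·) l f := ⟨a, hL a ha⟩
  have hLle : L ≤ liminf f l :=
    (le_liminf_iff' hbddAbove.isCoboundedUnder_flip hbddBelow).2 hL
  have hleU : limsup f l ≤ U :=
    (limsup_le_iff' hbddBelow.isCoboundedUnder_flip hbddAbove).2 hU
  have hle : liminf f l ≤ limsup f l := liminf_le_limsup hbddAbove hbddBelow
  exact ⟨⟨hLle, hle.trans hleU⟩, ⟨hLle.trans hle, hleU⟩⟩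

end LiminfLimsup

section Doubling

variable {n : ℕ} {ub vb : ℝ → En n → ℝ} {T B ε η t₀ r : ℝ} {x₀ y₀ : En n}

/-- The paper's `M(r)`. -/
def nearDiagonalSup (ub vb : ℝ → En n → ℝ) (T r : ℝ) : ℝ :=
  sSup {w : ℝ | ∃ t ∈ Icc (0:ℝ) T, ∃ x y : En n, ‖x - y‖ ≤ r ∧ w = ub t x - vb t y}

def penalty (ε η : ℝ) (x y : En n) : ℝ :=
  ‖x - y‖ ^ 2 / ε ^ 2 + η * (‖x‖ ^ 2 + ‖y‖ ^ 2)

theorem Psi_eq_sub_penalty (t : ℝ) (x y : En n) :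
    Psi ub vb ε η t x y = ub t x - vb t y - penalty ε η x y := by
  unfold Psi penalty
  ring

theorem penalty_nonneg (hη : 0 ≤ η) (x y : En n) : 0 ≤ penalty ε η x y := by
  unfold penalty
  positivity

theorem exists_abs_sub_le (hubd : ∃ M, ∀ t ∈ Icc (0:ℝ) T, ∀ x : En n, |ub t x| ≤ M)
    (hvbd : ∃ M, ∀ t ∈ Icc (0:ℝ) T, ∀ x : En n, |vb t x| ≤ M) :
    ∃ B, 0 ≤ B ∧ ∀ t ∈ Icc (0:ℝ) T, ∀ x y : En n, |ub t x - vb t y| ≤ B := by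
  obtain ⟨Mu, hMu⟩ := hubd
  obtain ⟨Mv, hMv⟩ := hvbd
  refine ⟨|Mu| + |Mv|, by positivity, fun t ht x y => ?_⟩
  calc |ub t x - vb t y| ≤ |ub t x| + |vb t y| := abs_sub _ _
    _ ≤ |Mu| + |Mv| := add_le_add ((hMu t ht x).trans (le_abs_self _))
        ((hMv t ht y).trans (le_abs_self _))

theorem le_nearDiagonalSup (hB : ∀ t ∈ Icc (0:ℝ) T, ∀ x y : En n, |ub t x - vb t y| ≤ B)
    {t : ℝ} (ht : t ∈ Icc (0:ℝ) T) {x y : En n} (hxy : ‖x - y‖ ≤ r) :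
    ub t x - vb t y ≤ nearDiagonalSup ub vb T r := by
  refine le_csSup ⟨B, ?_⟩ ⟨t, ht, x, y, hxy, rfl⟩
  rintro w ⟨t', ht', x', y', -, rfl⟩
  exact (le_abs_self _).trans (hB t' ht' x' y')

theorem exists_lt_sub_of_lt_nearDiagonalSup (ht₀ : t₀ ∈ Icc (0:ℝ) T) (hr : 0 ≤ r) {a : ℝ}
    (ha : a < nearDiagonalSup ub vb T r) :
    ∃ t ∈ Icc (0:ℝ) T, ∃ x y : En n, ‖x - y‖ ≤ r ∧ a < ub t x - vb t y := by
  obtain ⟨w, ⟨t, ht, x, y, hxy, rfl⟩, hw⟩ :=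
    exists_lt_of_lt_csSup (by exact ⟨_, t₀, ht₀, 0, 0, by simpa using hr, rfl⟩) ha
  exact ⟨t, ht, x, y, hxy, hw⟩

def IsMaxPointPsi (ub vb : ℝ → En n → ℝ) (T ε η t₀ : ℝ) (x₀ y₀ : En n) : Prop :=
  t₀ ∈ Icc (0:ℝ) T ∧
    ∀ t ∈ Icc (0:ℝ) T, ∀ x y : En n, Psi ub vb ε η t x y ≤ Psi ub vb ε η t₀ x₀ y₀

theorem penalty_le_of_isMaxPointPsi
    (hB : ∀ t ∈ Icc (0:ℝ) T, ∀ x y : En n, |ub t x - vb t y| ≤ B)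
    (hmax : IsMaxPointPsi ub vb T ε η t₀ x₀ y₀) : penalty ε η x₀ y₀ ≤ 2 * B := by
  have hcomp := hmax.2 t₀ hmax.1 0 0
  rw [Psi_eq_sub_penalty, Psi_eq_sub_penalty] at hcomp
  have h0 : penalty ε η (0 : En n) 0 = 0 := by simp [penalty]
  have hlow := neg_abs_le (ub t₀ 0 - vb t₀ 0)
  have hup := le_abs_self (ub t₀ x₀ - vb t₀ y₀)
  linarith [hB t₀ hmax.1 0 0, hB t₀ hmax.1 x₀ y₀]

/-- The `+ 1` keeps the radius positive when `B = 0`, so that it tends to `0` inside `(0, ∞)`. -/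
theorem norm_sub_le_of_isMaxPointPsi
    (hB : ∀ t ∈ Icc (0:ℝ) T, ∀ x y : En n, |ub t x - vb t y| ≤ B) (hε : 0 < ε) (hη : 0 ≤ η)
    (hmax : IsMaxPointPsi ub vb T ε η t₀ x₀ y₀) : ‖x₀ - y₀‖ ≤ ε * (B + 1) := by
  have hB0 : 0 ≤ B := (abs_nonneg _).trans (hB t₀ hmax.1 0 0)
  have hpen : ‖x₀ - y₀‖ ^ 2 / ε ^ 2 ≤ 2 * B := by
    have := penalty_le_of_isMaxPointPsi hB hmax
    unfold penalty at this
    nlinarith [norm_nonneg x₀, norm_nonneg y₀]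
  rw [div_le_iff₀ (by positivity)] at hpen
  refine (pow_le_pow_iff_left₀ (norm_nonneg _) (by positivity) two_ne_zero).1 ?_
  nlinarith

def doublingLowerBound (ub vb : ℝ → En n → ℝ) (T ε : ℝ) : ℝ :=
  nearDiagonalSup ub vb T (ε ^ 2) - ε ^ 2

def doublingUpperBound (ub vb : ℝ → En n → ℝ) (T B ε : ℝ) : ℝ :=
  nearDiagonalSup ub vb T (ε * (B + 1))

theorem sub_le_doublingUpperBound_of_isMaxPointPsi
    (hB : ∀ t ∈ Icc (0:ℝ) T, ∀ x y : En n, |ub t x - vb t y| ≤ B) (hε : 0 < ε) (hη : 0 ≤ η)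
    (hmax : IsMaxPointPsi ub vb T ε η t₀ x₀ y₀) :
    ub t₀ x₀ - vb t₀ y₀ ≤ doublingUpperBound ub vb T B ε :=
  le_nearDiagonalSup hB hmax.1 (norm_sub_le_of_isMaxPointPsi hB hε hη hmax)

theorem tendsto_doublingLowerBound {M' : ℝ}
    (hM' : Tendsto (nearDiagonalSup ub vb T) (𝓝[>] 0) (𝓝 M')) :
    Tendsto (doublingLowerBound ub vb T) (𝓝[>] 0) (𝓝 M') := by
  have hsq : Tendsto (fun ε : ℝ => ε ^ 2) (𝓝[>] 0) (𝓝[>] 0) :=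
    tendsto_nhdsGT_zero_of_continuous (continuous_pow 2) (zero_pow two_ne_zero)
      fun _ hε => pow_pos hε 2
  have := (hM'.comp hsq).sub (hsq.mono_right nhdsWithin_le_nhds)
  rwa [sub_zero] at this

theorem tendsto_doublingUpperBound (hB : 0 ≤ B) {M' : ℝ}
    (hM' : Tendsto (nearDiagonalSup ub vb T) (𝓝[>] 0) (𝓝 M')) :
    Tendsto (doublingUpperBound ub vb T B) (𝓝[>] 0) (𝓝 M') :=
  hM'.comp (tendsto_nhdsGT_zero_of_continuous (continuous_mul_const _) (zero_mul _)
    fun _ hε => by positivity)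

variable {pt : ℝ → ℝ} {px py : ℝ → En n}

theorem eventually_le_Psi_of_isMaxPointPsi (hε : 0 < ε)
    (hmax : ∀ η > 0, IsMaxPointPsi ub vb T ε η (pt η) (px η) (py η)) {a : ℝ}
    (ha : a < doublingLowerBound ub vb T ε) :
    ∀ᶠ η in 𝓝[>] 0, a ≤ Psi ub vb ε η (pt η) (px η) (py η) := by
  obtain ⟨t, ht, x, y, hxy, hlt⟩ :=
    exists_lt_sub_of_lt_nearDiagonalSup (hmax 1 one_pos).1 (sq_nonneg ε) (a := a + ε ^ 2)
      (by unfold doublingLowerBound at ha; linarith)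
  have hnear : ‖x - y‖ ^ 2 / ε ^ 2 ≤ ε ^ 2 := by
    rw [div_le_iff₀ (by positivity)]
    nlinarith [norm_nonneg (x - y)]
  have hlim : Tendsto (fun η => Psi ub vb ε η t x y) (𝓝[>] 0) (𝓝 (Psi ub vb ε 0 t x y)) := by
    refine (Continuous.tendsto ?_ 0).mono_left nhdsWithin_le_nhds
    unfold Psi
    fun_prop
  have hlt0 : a < Psi ub vb ε 0 t x y := by
    rw [Psi_eq_sub_penalty]
    simp only [penalty, zero_mul, add_zero]
    linarith
  filter_upwards [hlim.eventually_const_lt hlt0, self_mem_nhdsWithin] with η hlt' hη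
  exact hlt'.le.trans ((hmax η hη).2 t ht x y)

variable (hB : ∀ t ∈ Icc (0:ℝ) T, ∀ x y : En n, |ub t x - vb t y| ≤ B) (hε : 0 < ε)
  (hmax : ∀ η > 0, IsMaxPointPsi ub vb T ε η (pt η) (px η) (py η))
include hB hε hmax

theorem Psi_le_doublingUpperBound (hη : 0 < η) :
    Psi ub vb ε η (pt η) (px η) (py η) ≤ doublingUpperBound ub vb T B ε := by
  rw [Psi_eq_sub_penalty]
  linarith [penalty_nonneg (ε := ε) hη.le (px η) (py η),
    sub_le_doublingUpperBound_of_isMaxPointPsi hB hε hη.le (hmax η hη)]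

theorem liminf_limsup_Psi_mem_Icc :
    liminf (fun η => Psi ub vb ε η (pt η) (px η) (py η)) (𝓝[>] 0)
        ∈ Icc (doublingLowerBound ub vb T ε) (doublingUpperBound ub vb T B ε)
      ∧ limsup (fun η => Psi ub vb ε η (pt η) (px η) (py η)) (𝓝[>] 0)
        ∈ Icc (doublingLowerBound ub vb T ε) (doublingUpperBound ub vb T B ε) :=
  liminf_limsup_mem_Icc (fun _ ha => eventually_le_Psi_of_isMaxPointPsi hε hmax ha)
    fun _ hb => eventually_mem_nhdsWithin.mono fun _ hη =>
      (Psi_le_doublingUpperBound hB hε hmax hη).trans hb.le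

theorem liminf_limsup_sub_mem_Icc :
    liminf (fun η => ub (pt η) (px η) - vb (pt η) (py η)) (𝓝[>] 0)
        ∈ Icc (doublingLowerBound ub vb T ε) (doublingUpperBound ub vb T B ε)
      ∧ limsup (fun η => ub (pt η) (px η) - vb (pt η) (py η)) (𝓝[>] 0)
        ∈ Icc (doublingLowerBound ub vb T ε) (doublingUpperBound ub vb T B ε) := by
  refine liminf_limsup_mem_Icc (fun a ha => ?_) fun b hb => ?_
  · filter_upwards [eventually_le_Psi_of_isMaxPointPsi hε hmax ha, self_mem_nhdsWithin]
      with η hle hη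
    rw [Psi_eq_sub_penalty] at hle
    linarith [penalty_nonneg (ε := ε) hη.le (px η) (py η)]
  · filter_upwards [self_mem_nhdsWithin] with η hη
    exact (sub_le_doublingUpperBound_of_isMaxPointPsi hB hε hη.le (hmax η hη)).trans hb.le

theorem eventually_penalty_le {b : ℝ}
    (hb : doublingUpperBound ub vb T B ε - doublingLowerBound ub vb T ε < b) :
    ∀ᶠ η in 𝓝[>] 0, penalty ε η (px η) (py η) ≤ b := by
  filter_upwards [eventually_le_Psi_of_isMaxPointPsi hε hmax
    (a := doublingUpperBound ub vb T B ε - b) (by linarith), self_mem_nhdsWithin] with η hle hη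
  rw [Psi_eq_sub_penalty] at hle
  linarith [sub_le_doublingUpperBound_of_isMaxPointPsi hB hε hη.le (hmax η hη)]

theorem limsup_norm_sub_div_mem_Icc :
    limsup (fun η => ‖px η - py η‖ / ε) (𝓝[>] 0) ∈ Icc 0
      (√(doublingUpperBound ub vb T B ε - doublingLowerBound ub vb T ε)) := by
  refine (liminf_limsup_mem_Icc
    (fun _ ha => Eventually.of_forall fun _ => ha.le.trans (by positivity)) fun b hb => ?_).2
  have hb0 : 0 < b := (Real.sqrt_nonneg _).trans_lt hb
  filter_upwards [eventually_penalty_le hB hε hmax ((Real.sqrt_lt' hb0).1 hb),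
    self_mem_nhdsWithin] with η hpen hη
  refine (pow_le_pow_iff_left₀ (by positivity) hb0.le two_ne_zero).1 ?_
  rw [div_pow]
  unfold penalty at hpen
  nlinarith [norm_nonneg (px η), norm_nonneg (py η), show (0:ℝ) < η from hη]

theorem limsup_mul_norm_sq_add_mem_Icc :
    limsup (fun η => η * (‖px η‖ ^ 2 + ‖py η‖ ^ 2)) (𝓝[>] 0) ∈ Icc 0
      (doublingUpperBound ub vb T B ε - doublingLowerBound ub vb T ε) := by
  refine (liminf_limsup_mem_Icc (fun a ha => ?_) fun b hb => ?_).2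
  · filter_upwards [self_mem_nhdsWithin] with η hη
    exact ha.le.trans (mul_nonneg hη.le (by positivity))
  · filter_upwards [eventually_penalty_le hB hε hmax hb] with η hpen
    unfold penalty at hpen
    linarith [show 0 ≤ ‖px η - py η‖ ^ 2 / ε ^ 2 by positivity]

end Doubling

theorem doubling_limits_ii_iii_general
    {n : ℕ} (T : ℝ)
    (ub vb : ℝ → En n → ℝ)
    (hubd : ∃ M, ∀ t ∈ Icc (0:ℝ) T, ∀ x : En n, |ub t x| ≤ M)
    (hvbd : ∃ M, ∀ t ∈ Icc (0:ℝ) T, ∀ x : En n, |vb t x| ≤ M)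
    (Mh : ℝ → ℝ)
    (hMh : ∀ r : ℝ, Mh r = sSup {w : ℝ | ∃ t ∈ Icc (0:ℝ) T, ∃ x y : En n,
      ‖x - y‖ ≤ r ∧ w = ub t x - vb t y})
    (M' : ℝ) (hM' : Tendsto Mh (𝓝[>] (0:ℝ)) (𝓝 M'))
    (pt : ℝ → ℝ → ℝ) (px py : ℝ → ℝ → En n)
    (hmax : ∀ ε > (0:ℝ), ∀ η > (0:ℝ),
      pt ε η ∈ Icc (0:ℝ) T ∧
      ∀ t ∈ Icc (0:ℝ) T, ∀ x y : En n,
        Psi ub vb ε η t x y ≤ Psi ub vb ε η (pt ε η) (px ε η) (py ε η))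
 :
    (Filter.liminf (fun ε => Filter.liminf
        (fun η => Psi ub vb ε η (pt ε η) (px ε η) (py ε η)) (𝓝[>] (0:ℝ)))
        (𝓝[>] (0:ℝ)) = M')
    ∧ (Filter.limsup (fun ε => Filter.limsup
        (fun η => Psi ub vb ε η (pt ε η) (px ε η) (py ε η)) (𝓝[>] (0:ℝ)))
        (𝓝[>] (0:ℝ)) = M')
    ∧ (Filter.liminf (fun ε => Filter.liminf
        (fun η => ub (pt ε η) (px ε η) - vb (pt ε η) (py ε η)) (𝓝[>] (0:ℝ)))
        (𝓝[>] (0:ℝ)) = M')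
    ∧ (Filter.limsup (fun ε => Filter.limsup
        (fun η => ub (pt ε η) (px ε η) - vb (pt ε η) (py ε η)) (𝓝[>] (0:ℝ)))
        (𝓝[>] (0:ℝ)) = M')
    ∧ (Filter.limsup (fun ε => Filter.limsup
        (fun η => ‖px ε η - py ε η‖ / ε) (𝓝[>] (0:ℝ)))
        (𝓝[>] (0:ℝ)) = 0)
    ∧ (Filter.limsup (fun ε => Filter.limsup
        (fun η => η * (‖px ε η‖ ^ 2 + ‖py ε η‖ ^ 2)) (𝓝[>] (0:ℝ)))
        (𝓝[>] (0:ℝ)) = 0) := by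
  obtain ⟨B, hB0, hB⟩ := exists_abs_sub_le hubd hvbd
  obtain rfl : Mh = nearDiagonalSup ub vb T := funext hMh
  have hlower := tendsto_doublingLowerBound hM'
  have hupper := tendsto_doublingUpperBound hB0 hM'
  have hgap := hupper.sub hlower
  rw [sub_self] at hgap
  have hsqrtgap := hgap.sqrt
  rw [Real.sqrt_zero] at hsqrtgap
  refine ⟨?_, ?_, ?_, ?_, ?_, ?_⟩
  · exact (tendsto_nhdsGT_zero_of_forall_pos_mem_Icc hlower hupper fun ε hε =>
      (liminf_limsup_Psi_mem_Icc hB hε (hmax ε hε)).1).liminf_eq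
  · exact (tendsto_nhdsGT_zero_of_forall_pos_mem_Icc hlower hupper fun ε hε =>
      (liminf_limsup_Psi_mem_Icc hB hε (hmax ε hε)).2).limsup_eq
  · exact (tendsto_nhdsGT_zero_of_forall_pos_mem_Icc hlower hupper fun ε hε =>
      (liminf_limsup_sub_mem_Icc hB hε (hmax ε hε)).1).liminf_eq
  · exact (tendsto_nhdsGT_zero_of_forall_pos_mem_Icc hlower hupper fun ε hε =>
      (liminf_limsup_sub_mem_Icc hB hε (hmax ε hε)).2).limsup_eq
  · exact (tendsto_nhdsGT_zero_of_forall_pos_mem_Icc tendsto_const_nhds hsqrtgap fun ε hε =>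
      limsup_norm_sub_div_mem_Icc hB hε (hmax ε hε)).limsup_eq
  · exact (tendsto_nhdsGT_zero_of_forall_pos_mem_Icc tendsto_const_nhds hgap fun ε hε =>
      limsup_mul_norm_sq_add_mem_Icc hB hε (hmax ε hε)).limsup_eq

/-- Doubling-of-variables limit lemma, parts (ii) and (iii):
iterated limits first in `η` and then in `ε`. -/
theorem doubling_limits_ii_iii
    {n : ℕ} (hn : 1 ≤ n) (T : ℝ) (hT : 0 < T)
    (ub vb : ℝ → En n → ℝ)
    (hubd : ∃ M, ∀ t ∈ Icc (0:ℝ) T, ∀ x : En n, |ub t x| ≤ M)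
    (hvbd : ∃ M, ∀ t ∈ Icc (0:ℝ) T, ∀ x : En n, |vb t x| ≤ M)
    (husc : UpperSemicontinuousOn (fun p : ℝ × En n => ub p.1 p.2) (Icc 0 T ×ˢ univ))
    (hlsc : LowerSemicontinuousOn (fun p : ℝ × En n => vb p.1 p.2) (Icc 0 T ×ˢ univ))
    (Mh : ℝ → ℝ)
    (hMh : ∀ r : ℝ, Mh r = sSup {w : ℝ | ∃ t ∈ Icc (0:ℝ) T, ∃ x y : En n,
      ‖x - y‖ ≤ r ∧ w = ub t x - vb t y})
    (M' : ℝ) (hM' : Tendsto Mh (𝓝[>] (0:ℝ)) (𝓝 M'))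
    (pt : ℝ → ℝ → ℝ) (px py : ℝ → ℝ → En n)
    (hmax : ∀ ε > (0:ℝ), ∀ η > (0:ℝ),
      pt ε η ∈ Icc (0:ℝ) T ∧
      ∀ t ∈ Icc (0:ℝ) T, ∀ x y : En n,
        Psi ub vb ε η t x y ≤ Psi ub vb ε η (pt ε η) (px ε η) (py ε η))
 :
    (Filter.liminf (fun ε => Filter.liminf
        (fun η => Psi ub vb ε η (pt ε η) (px ε η) (py ε η)) (𝓝[>] (0:ℝ)))
        (𝓝[>] (0:ℝ)) = M')
    ∧ (Filter.limsup (fun ε => Filter.limsup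
        (fun η => Psi ub vb ε η (pt ε η) (px ε η) (py ε η)) (𝓝[>] (0:ℝ)))
        (𝓝[>] (0:ℝ)) = M')
    ∧ (Filter.liminf (fun ε => Filter.liminf
        (fun η => ub (pt ε η) (px ε η) - vb (pt ε η) (py ε η)) (𝓝[>] (0:ℝ)))
        (𝓝[>] (0:ℝ)) = M')
    ∧ (Filter.limsup (fun ε => Filter.limsup
        (fun η => ub (pt ε η) (px ε η) - vb (pt ε η) (py ε η)) (𝓝[>] (0:ℝ)))
        (𝓝[>] (0:ℝ)) = M')
    ∧ (Filter.limsup (fun ε => Filter.limsup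
        (fun η => ‖px ε η - py ε η‖ / ε) (𝓝[>] (0:ℝ)))
        (𝓝[>] (0:ℝ)) = 0)
    ∧ (Filter.limsup (fun ε => Filter.limsup
        (fun η => η * (‖px ε η‖ ^ 2 + ‖py ε η‖ ^ 2)) (𝓝[>] (0:ℝ)))
        (𝓝[>] (0:ℝ)) = 0) :=
  doubling_limits_ii_iii_general T ub vb hubd hvbd Mh hMh M' hM' pt px py hmax
end
end

section
/- Matrix inequality from the Ishii block estimate: let n, d ≥ 1, ε, η > 0, and let X, Y be symmetric n×n real matrices such that ⟨Xξ, ξ⟩ − ⟨Yζ, ζ⟩ ≤ (2/ε²)|ξ − ζ|² + 2η(|ξ|² + |ζ|²) for all ξ, ζ ∈ ℝⁿ (i.e. the block matrix diag(X, −Y) is dominated by (2/ε²)[[I,−I],[−I,I]] + 2η·I_{2n} in the sense of quadratic forms). Then for all real n×d matrices A and B: ½Tr(AAᵀX) ≤ ½Tr(BBᵀY) + (1/ε²)‖A − B‖² + η(‖A‖² + ‖B‖²), where ‖·‖ denotes the Frobenius norm. -/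
open Set Filter Topology

noncomputable section

/-! Apply the block inequality to the `j`-th columns `ξ = A eⱼ`, `ζ = B eⱼ` and sum over `j`:
`Tr(AAᵀX) = ∑ⱼ ⟨X A eⱼ, A eⱼ⟩` and `‖A‖² = ∑ⱼ |A eⱼ|²`. -/

open Matrix

theorem Matrix.trace_mul_transpose_mul {m ι R : Type*} [Fintype m] [Fintype ι] [CommSemiring R]
    (A : Matrix m ι R) (M : Matrix m m R) :
    (A * Aᵀ * M).trace = ∑ j, Aᵀ j ⬝ᵥ (M *ᵥ Aᵀ j) := by
  rw [trace_mul_cycle, trace_mul_comm]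
  simp only [trace, diag, mul_apply, dotProduct, mulVec, transpose_apply]

theorem Matrix.trace_mul_transpose_mul_eq_sum_inner {m ι : Type*} [Fintype m] [DecidableEq m]
    [Fintype ι] (A : Matrix m ι ℝ) (M : Matrix m m ℝ) :
    (A * Aᵀ * M).trace
      = ∑ j, inner ℝ (toEuclideanLin M (WithLp.toLp 2 (Aᵀ j))) (WithLp.toLp 2 (Aᵀ j)) := by
  rw [trace_mul_transpose_mul]
  rfl

theorem frobNorm_sq_eq_sum_norm_sq_col {n d : ℕ} (A : Matrix (Fin n) (Fin d) ℝ) :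
    frobNorm A ^ 2 = ∑ j, ‖WithLp.toLp 2 (Aᵀ j)‖ ^ 2 := by
  rw [frobNorm, Real.sq_sqrt (by positivity), Finset.sum_comm]
  simp [EuclideanSpace.real_norm_sq_eq]

theorem ishii_block_trace_inequality_general
    {n d : ℕ}
    (ε η : ℝ)
    (X Y : Matrix (Fin n) (Fin n) ℝ)
    (hblock : ∀ ξ ζ : En n,
      (inner ℝ (Matrix.toEuclideanLin X ξ) ξ : ℝ)
        - (inner ℝ (Matrix.toEuclideanLin Y ζ) ζ : ℝ)
        ≤ (2 / ε ^ 2) * ‖ξ - ζ‖ ^ 2 + 2 * η * (‖ξ‖ ^ 2 + ‖ζ‖ ^ 2)) :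
    ∀ (Am Bm : Matrix (Fin n) (Fin d) ℝ),
      (1 / 2) * Matrix.trace (Am * Am.transpose * X)
        ≤ (1 / 2) * Matrix.trace (Bm * Bm.transpose * Y)
          + (1 / ε ^ 2) * (frobNorm (Am - Bm)) ^ 2
          + η * ((frobNorm Am) ^ 2 + (frobNorm Bm) ^ 2) := by
  intro Am Bm
  have hcol_sub (j : Fin d) :
      WithLp.toLp 2 ((Am - Bm)ᵀ j) = WithLp.toLp 2 (Amᵀ j) - WithLp.toLp 2 (Bmᵀ j) := rfl
  have hcols := Finset.sum_le_sum fun j (_ : j ∈ Finset.univ) =>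
    hblock (WithLp.toLp 2 (Amᵀ j)) (WithLp.toLp 2 (Bmᵀ j))
  simp only [Finset.sum_sub_distrib, Finset.sum_add_distrib, ← Finset.mul_sum] at hcols
  rw [trace_mul_transpose_mul_eq_sum_inner, trace_mul_transpose_mul_eq_sum_inner,
    frobNorm_sq_eq_sum_norm_sq_col, frobNorm_sq_eq_sum_norm_sq_col, frobNorm_sq_eq_sum_norm_sq_col]
  simp only [hcol_sub]
  ring_nf at hcols ⊢
  linarith

/-- Matrix inequality from the Ishii block estimate. -/
theorem ishii_block_trace_inequality
    {n d : ℕ} (hn : 1 ≤ n) (hd : 1 ≤ d)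
    (ε η : ℝ) (hε : 0 < ε) (hη : 0 < η)
    (X Y : Matrix (Fin n) (Fin n) ℝ) (hX : X.IsSymm) (hY : Y.IsSymm)
    (hblock : ∀ ξ ζ : En n,
      (inner ℝ (Matrix.toEuclideanLin X ξ) ξ : ℝ)
        - (inner ℝ (Matrix.toEuclideanLin Y ζ) ζ : ℝ)
        ≤ (2 / ε ^ 2) * ‖ξ - ζ‖ ^ 2 + 2 * η * (‖ξ‖ ^ 2 + ‖ζ‖ ^ 2)) :
    ∀ (Am Bm : Matrix (Fin n) (Fin d) ℝ),
      (1 / 2) * Matrix.trace (Am * Am.transpose * X)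
        ≤ (1 / 2) * Matrix.trace (Bm * Bm.transpose * Y)
          + (1 / ε ^ 2) * (frobNorm (Am - Bm)) ^ 2
          + η * ((frobNorm Am) ^ 2 + (frobNorm Bm) ^ 2) :=
  ishii_block_trace_inequality_general ε η X Y hblock
end
end

section
/- Approximation of strict local maxima along a decreasing sequence: let D := [0,T)×ℝⁿ, let (w^p)_{p∈ℕ} be continuous functions D → ℝ with w^{p+1} ≤ w^p pointwise, converging pointwise to a function w⁰ : D → ℝ, let φ : D → ℝ be continuous, and let (t,x) ∈ D be a strict local maximum point of w⁰ − φ. Then there exists a sequence (t_p, x_p) in D converging to (t,x) such that, for all sufficiently large p, (t_p, x_p) is a local maximum point of w^p − φ, and lim_{p→∞} w^p(t_p, x_p) = w⁰(t,x). -/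
open Set Filter Topology

noncomputable section

/-! Maximise `wᵖ - φ` over a compact neighbourhood `K` of `(t,x)` in `D`. Because the `wᵖ - φ`
are upper semicontinuous and decrease pointwise, a Dini-type compactness argument shows: if `b`
lies strictly above the limit `w⁰ - φ` everywhere on a compact set, then eventually `wᵖ - φ < b`
on the whole set. On `K` this squeezes the maximal values down to `w⁰(t,x) - φ(t,x)`; on `K`
minus a neighbourhood of `(t,x)`, where the strict maximum keeps `w⁰ - φ` below that value, it
pushes the maximisers into the neighbourhood. Maximisers that close to `(t,x)` lie in the relative
interior of `K`, so they are local maxima in `D`. -/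

section DecreasingMaxima

variable {X : Type*} {g : ℕ → X → ℝ} {K : Set X} {g₀ : X → ℝ} {z : ℕ → X} {z₀ : X}

theorem le_apply_of_isMaxOn_of_antitone (hanti : ∀ c ∈ K, Antitone (g · c))
    (hlim : ∀ c ∈ K, Tendsto (g · c) atTop (𝓝 (g₀ c))) (hz₀ : z₀ ∈ K)
    (hz : ∀ p, IsMaxOn (g p) K (z p)) (p : ℕ) : g₀ z₀ ≤ g p (z p) :=
  ((hanti z₀ hz₀).le_of_tendsto (hlim z₀ hz₀) p).trans (hz p hz₀)

variable [TopologicalSpace X]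

theorem IsCompact.eventually_forall_lt_of_antitone {S : Set X} (hS : IsCompact S)
    (hg : ∀ p, UpperSemicontinuousOn (g p) S) (hanti : ∀ c ∈ S, Antitone (g · c)) {b : ℝ}
    (hlt : ∀ c ∈ S, ∃ p, g p c < b) : ∀ᶠ p in atTop, ∀ c ∈ S, g p c < b := by
  refine hS.induction_on (p := fun s => ∀ᶠ p in atTop, ∀ c ∈ s, g p c < b) (by simp)
    (fun s t hst ht => ht.mono fun p hp c hc => hp c (hst hc))
    (fun s t hs ht => (hs.and ht).mono fun p hp c hc => hc.elim (hp.1 c) (hp.2 c)) ?_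
  intro c hc
  obtain ⟨q, hq⟩ := hlt c hc
  refine ⟨S ∩ {y | g q y < b}, inter_mem self_mem_nhdsWithin (hg q c hc b hq), ?_⟩
  filter_upwards [eventually_ge_atTop q] with p hp y hy
  exact (hanti y hy.1 hp).trans_lt hy.2

theorem IsCompact.tendsto_apply_isMaxOn_of_antitone (hK : IsCompact K)
    (hg : ∀ p, UpperSemicontinuousOn (g p) K) (hanti : ∀ c ∈ K, Antitone (g · c))
    (hlim : ∀ c ∈ K, Tendsto (g · c) atTop (𝓝 (g₀ c))) (hz₀ : z₀ ∈ K) (hmax : IsMaxOn g₀ K z₀)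
    (hzK : ∀ p, z p ∈ K) (hz : ∀ p, IsMaxOn (g p) K (z p)) :
    Tendsto (fun p => g p (z p)) atTop (𝓝 (g₀ z₀)) := by
  refine tendsto_order.2 ⟨fun b hb => .of_forall fun p =>
    hb.trans_le (le_apply_of_isMaxOn_of_antitone hanti hlim hz₀ hz p), fun b hb => ?_⟩
  have hbelow := hK.eventually_forall_lt_of_antitone hg hanti fun c hc =>
    ((hlim c hc).eventually (gt_mem_nhds ((hmax hc).trans_lt hb))).exists
  exact hbelow.mono fun p hp => hp _ (hzK p)

theorem IsCompact.tendsto_isMaxOn_of_antitone (hK : IsCompact K)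
    (hg : ∀ p, UpperSemicontinuousOn (g p) K) (hanti : ∀ c ∈ K, Antitone (g · c))
    (hlim : ∀ c ∈ K, Tendsto (g · c) atTop (𝓝 (g₀ c))) (hz₀ : z₀ ∈ K)
    (hstrict : ∀ c ∈ K, c ≠ z₀ → g₀ c < g₀ z₀)
    (hzK : ∀ p, z p ∈ K) (hz : ∀ p, IsMaxOn (g p) K (z p)) : Tendsto z atTop (𝓝 z₀) := by
  intro U hU
  have hbelow := (hK.diff isOpen_interior).eventually_forall_lt_of_antitone
    (fun p => (hg p).mono sdiff_subset) (fun c hc => hanti c hc.1) fun c hc =>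
      have hne : c ≠ z₀ := fun h => hc.2 (h ▸ mem_interior_iff_mem_nhds.2 hU)
      ((hlim c hc.1).eventually (gt_mem_nhds (hstrict c hc.1 hne))).exists
  refine mem_map.2 (hbelow.mono fun p hp => ?_)
  by_contra hzU
  exact (le_apply_of_isMaxOn_of_antitone hanti hlim hz₀ hz p).not_gt
    (hp _ ⟨hzK p, fun h => hzU (interior_subset h)⟩)

theorem IsCompact.exists_tendsto_isLocalMaxOn_of_antitone {D : Set X} (hK : IsCompact K)
    (hKD : K ∈ 𝓝[D] z₀) (hz₀ : z₀ ∈ K) (hg : ∀ p, UpperSemicontinuousOn (g p) K)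
    (hanti : ∀ c ∈ K, Antitone (g · c)) (hlim : ∀ c ∈ K, Tendsto (g · c) atTop (𝓝 (g₀ c)))
    (hstrict : ∀ c ∈ K, c ≠ z₀ → g₀ c < g₀ z₀) :
    ∃ z : ℕ → X, (∀ p, z p ∈ K) ∧ Tendsto z atTop (𝓝 z₀)
      ∧ (∀ᶠ p in atTop, IsLocalMaxOn (g p) D (z p))
      ∧ Tendsto (fun p => g p (z p)) atTop (𝓝 (g₀ z₀)) := by
  choose z hzK hz using fun p => (hg p).exists_isMaxOn ⟨z₀, hz₀⟩ hK
  have hmax : IsMaxOn g₀ K z₀ := isMaxOn_iff.2 fun c hc =>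
    (eq_or_ne c z₀).elim (fun h => (congrArg g₀ h).le) fun h => (hstrict c hc h).le
  have hzt := hK.tendsto_isMaxOn_of_antitone hg hanti hlim hz₀ hstrict hzK hz
  refine ⟨z, hzK, hzt, ?_, hK.tendsto_apply_isMaxOn_of_antitone hg hanti hlim hz₀ hmax hzK hz⟩
  obtain ⟨U, hU, hz₀U, hUK⟩ := mem_nhdsWithin.1 hKD
  filter_upwards [hzt (hU.mem_nhds hz₀U)] with p hzU
  exact mem_of_superset (inter_mem_nhdsWithin D (hU.mem_nhds hzU)) fun y hy =>
    hz p (hUK ⟨hy.2, hy.1⟩)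

end DecreasingMaxima

theorem Prod.dist_lt_iff_abs_sub_lt_and_norm_sub_lt {E : Type*} [SeminormedAddCommGroup E]
    {s t δ : ℝ} {y x : E} : dist (s, y) (t, x) < δ ↔ |s - t| < δ ∧ ‖y - x‖ < δ := by
  rw [Prod.dist_eq, max_lt_iff, Real.dist_eq, dist_eq_norm]

theorem exists_isCompact_mem_nhdsWithin_Ico_prod_univ {E : Type*} [SeminormedAddCommGroup E]
    [ProperSpace E] {T t δ : ℝ} (ht : t ∈ Ico 0 T) (x : E) (hδ : 0 < δ) :
    ∃ K ⊆ Metric.ball (t, x) δ ∩ Ico 0 T ×ˢ univ,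
      IsCompact K ∧ K ∈ 𝓝[Ico 0 T ×ˢ univ] (t, x) := by
  set r := min δ (T - t) / 2 with hr_def
  have hr : 0 < r := half_pos (lt_min hδ (sub_pos.2 ht.2))
  have hrδ : r < δ := by linarith [min_le_left δ (T - t)]
  have hrT : t + r < T := by linarith [min_le_right δ (T - t)]
  refine ⟨Metric.closedBall (t, x) r ∩ Ici 0 ×ˢ univ, fun c hc => ?_,
    (isCompact_closedBall _ _).inter_right (isClosed_Ici.prod isClosed_univ),
    inter_mem (nhdsWithin_le_nhds (Metric.closedBall_mem_nhds _ hr))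
      (mem_of_superset self_mem_nhdsWithin fun c hc => ⟨hc.1.1, trivial⟩)⟩
  have hct : c.1 - t ≤ dist c (t, x) := calc
    c.1 - t ≤ dist c.1 t := (le_abs_self _).trans_eq (Real.dist_eq _ _).symm
    _ ≤ dist c (t, x) := by rw [Prod.dist_eq]; exact le_max_left _ _
  exact ⟨Metric.mem_closedBall.1 hc.1 |>.trans_lt hrδ,
    ⟨hc.2.1, by linarith [Metric.mem_closedBall.1 hc.1]⟩, trivial⟩

theorem strict_local_max_approximation_general
    {n : ℕ} (T : ℝ)
    (w : ℕ → ℝ → En n → ℝ)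
    (hwc : ∀ p, ContinuousOn (fun q : ℝ × En n => w p q.1 q.2) (Ico 0 T ×ˢ univ))
    (hwmono : ∀ p, ∀ t ∈ Ico (0:ℝ) T, ∀ x : En n, w (p+1) t x ≤ w p t x)
    (w0 : ℝ → En n → ℝ)
    (hconv : ∀ t ∈ Ico (0:ℝ) T, ∀ x : En n,
      Tendsto (fun p => w p t x) atTop (𝓝 (w0 t x)))
    (φ : ℝ → En n → ℝ)
    (hφ : ContinuousOn (fun q : ℝ × En n => φ q.1 q.2) (Ico 0 T ×ˢ univ))
    (t : ℝ) (x : En n) (ht : t ∈ Ico (0:ℝ) T)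
    (hmax : ∃ δ > (0:ℝ), ∀ s ∈ Ico (0:ℝ) T, ∀ y : En n,
      |s - t| < δ → ‖y - x‖ < δ → (s, y) ≠ (t, x) →
      w0 s y - φ s y < w0 t x - φ t x) :
    ∃ (tp : ℕ → ℝ) (xp : ℕ → En n),
      (∀ p, tp p ∈ Ico (0:ℝ) T)
      ∧ Tendsto tp atTop (𝓝 t) ∧ Tendsto xp atTop (𝓝 x)
      ∧ (∀ᶠ p in atTop, ∃ δ > (0:ℝ), ∀ s ∈ Ico (0:ℝ) T, ∀ y : En n,
          |s - tp p| < δ → ‖y - xp p‖ < δ →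
          w p s y - φ s y ≤ w p (tp p) (xp p) - φ (tp p) (xp p))
      ∧ Tendsto (fun p => w p (tp p) (xp p)) atTop (𝓝 (w0 t x)) := by
  obtain ⟨δ, hδ, hstrict⟩ := hmax
  obtain ⟨K, hKsub, hK, hKnhds⟩ := exists_isCompact_mem_nhdsWithin_Ico_prod_univ ht x hδ
  have hKt : ∀ c ∈ K, c.1 ∈ Ico 0 T := fun c hc => (hKsub hc).2.1
  obtain ⟨z, hzK, hzt, hloc, hval⟩ := hK.exists_tendsto_isLocalMaxOn_of_antitone
    (g := fun p c => w p c.1 c.2 - φ c.1 c.2) (g₀ := fun c => w0 c.1 c.2 - φ c.1 c.2) hKnhds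
    (mem_of_mem_nhdsWithin (mk_mem_prod ht (mem_univ x)) hKnhds)
    (fun p => (((hwc p).sub hφ).mono fun c hc => (hKsub hc).2).upperSemicontinuousOn)
    (fun c hc => antitone_nat_of_succ_le fun p =>
      sub_le_sub_right (hwmono p c.1 (hKt c hc) c.2) _)
    (fun c hc => (hconv c.1 (hKt c hc) c.2).sub_const _)
    fun c hc hne =>
      have hcδ := Prod.dist_lt_iff_abs_sub_lt_and_norm_sub_lt.1 (hKsub hc).1
      hstrict c.1 (hKt c hc) c.2 hcδ.1 hcδ.2 hne
  refine ⟨fun p => (z p).1, fun p => (z p).2, fun p => hKt _ (hzK p),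
    (continuous_fst.tendsto _).comp hzt, (continuous_snd.tendsto _).comp hzt, ?_, ?_⟩
  · filter_upwards [hloc] with p hp
    obtain ⟨ε, hε, hball⟩ := Metric.mem_nhdsWithin_iff.1 hp
    exact ⟨ε, hε, fun s hs y hst hyx =>
      @hball (s, y) ⟨Prod.dist_lt_iff_abs_sub_lt_and_norm_sub_lt.2 ⟨hst, hyx⟩, hs, trivial⟩⟩
  · have hφz : Tendsto (fun p => φ (z p).1 (z p).2) atTop (𝓝 (φ t x)) :=
      (hφ _ ⟨ht, trivial⟩).tendsto.comp
        (tendsto_nhdsWithin_iff.2 ⟨hzt, .of_forall fun p => (hKsub (hzK p)).2⟩)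
    simpa using hval.add hφz

/-- Approximation of strict local maxima along a decreasing
sequence of continuous functions. -/
theorem strict_local_max_approximation
    {n : ℕ} (hn : 1 ≤ n) (T : ℝ) (hT : 0 < T)
    (w : ℕ → ℝ → En n → ℝ)
    (hwc : ∀ p, ContinuousOn (fun q : ℝ × En n => w p q.1 q.2) (Ico 0 T ×ˢ univ))
    (hwmono : ∀ p, ∀ t ∈ Ico (0:ℝ) T, ∀ x : En n, w (p+1) t x ≤ w p t x)
    (w0 : ℝ → En n → ℝ)
    (hconv : ∀ t ∈ Ico (0:ℝ) T, ∀ x : En n,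
      Tendsto (fun p => w p t x) atTop (𝓝 (w0 t x)))
    (φ : ℝ → En n → ℝ)
    (hφ : ContinuousOn (fun q : ℝ × En n => φ q.1 q.2) (Ico 0 T ×ˢ univ))
    (t : ℝ) (x : En n) (ht : t ∈ Ico (0:ℝ) T)
    (hmax : ∃ δ > (0:ℝ), ∀ s ∈ Ico (0:ℝ) T, ∀ y : En n,
      |s - t| < δ → ‖y - x‖ < δ → (s, y) ≠ (t, x) →
      w0 s y - φ s y < w0 t x - φ t x) :
    ∃ (tp : ℕ → ℝ) (xp : ℕ → En n),
      (∀ p, tp p ∈ Ico (0:ℝ) T)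
      ∧ Tendsto tp atTop (𝓝 t) ∧ Tendsto xp atTop (𝓝 x)
      ∧ (∀ᶠ p in atTop, ∃ δ > (0:ℝ), ∀ s ∈ Ico (0:ℝ) T, ∀ y : En n,
          |s - tp p| < δ → ‖y - xp p‖ < δ →
          w p s y - φ s y ≤ w p (tp p) (xp p) - φ (tp p) (xp p))
      ∧ Tendsto (fun p => w p (tp p) (xp p)) atTop (𝓝 (w0 t x)) :=
  strict_local_max_approximation_general T w hwc hwmono w0 hconv φ hφ t x ht hmax
end
end
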